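/- arXiv:2601.17325 — 7 statements merged into one kernel-verified Lean document; each statement's English description precedes it below -/
import Mathlib

section
/- Let r ≥ 3 and k ≥ 2, set t = (r−1)(k−1)+1, and assume t divides n and that a Steiner system S(2,r,t) exists. Then there exists a linear r-uniform hypergraph H on an n-element vertex set with r·|E(H)| = n·(k−1) which contains no copy of any linear r-tree with k edges; concretely, H contains no k distinct hyperedges e_1, …, e_k whose union has exactly (r−1)·k+1 vertices and whose intersection graph is connected (i.e., for every nonempty proper subset S of {1,…,k} some e_i with i ∈ S intersects some e_j with j ∉ S). -/
/-!
Take `n / t` vertex-disjoint copies of the Steiner system. Two edges of a Steiner system share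
at most one vertex, and the edges through a vertex `u` partition the other `t - 1` vertices
into blocks of size `r - 1`, so every vertex has degree `k - 1` and `r |E| = n (k - 1)`.
A linear tree is connected, so its edges all lie in one copy; but it spans
`(r - 1) k + 1 > t` vertices.
-/

open Finset

variable {α β ι κ γ : Type*}

def IsIntersectionConnected [Fintype κ] [DecidableEq α] (e : κ → Finset α) : Prop :=
  ∀ S : Finset κ, S.Nonempty → S ≠ univ → ∃ i ∈ S, ∃ j ∉ S, (e i ∩ e j).Nonempty

theorem IsIntersectionConnected.constant [Fintype κ] [DecidableEq α] {e : κ → Finset α}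
    (he : IsIntersectionConnected e) {c : κ → γ}
    (hc : ∀ i j, (e i ∩ e j).Nonempty → c i = c j) (i j : κ) : c i = c j := by
  classical
  by_contra hij
  have hS : ({l | c l = c i} : Finset κ) ≠ univ := by
    intro h
    have hj : j ∈ ({l | c l = c i} : Finset κ) := by rw [h]; exact mem_univ j
    exact hij (mem_filter.mp hj).2.symm
  obtain ⟨a, ha, b, hb, hab⟩ := he _ ⟨i, by simp⟩ hS
  simp only [mem_filter, mem_univ, true_and] at ha hb
  exact hb (ha ▸ (hc a b hab).symm)

def IsSteinerSystem (r : ℕ) (E : Finset (Finset α)) : Prop :=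
  (E : Set (Finset α)).Sized r ∧
    ∀ u v : α, u ≠ v → ∃! e, e ∈ E ∧ u ∈ e ∧ v ∈ e

namespace IsSteinerSystem

variable [DecidableEq α] {r : ℕ} {E : Finset (Finset α)}

theorem pairwise_card_inter_le_one (hE : IsSteinerSystem r E) :
    (E : Set (Finset α)).Pairwise fun e f => #(e ∩ f) ≤ 1 := by
  intro e he f hf hef
  by_contra! h
  obtain ⟨u, hu, v, hv, huv⟩ := one_lt_card.mp h
  rw [mem_inter] at hu hv
  exact hef ((hE.2 u v huv).unique ⟨he, hu.1, hv.1⟩ ⟨hf, hu.2, hv.2⟩)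

theorem card_filter_mem_mul [Fintype α] (hE : IsSteinerSystem r E) (u : α) :
    #{e ∈ E | u ∈ e} * (r - 1) = Fintype.card α - 1 := by
  have hdisj :
      (({e ∈ E | u ∈ e} : Finset _) : Set (Finset α)).PairwiseDisjoint (·.erase u) := by
    intro e he f hf hef
    simp only [coe_filter, Set.mem_ofPred_eq] at he hf
    rw [Function.onFun, disjoint_left]
    intro v hve hvf
    have : 1 < #(e ∩ f) :=
      one_lt_card.mpr ⟨v, mem_inter.mpr ⟨mem_of_mem_erase hve, mem_of_mem_erase hvf⟩,
        u, mem_inter.mpr ⟨he.2, hf.2⟩, ne_of_mem_erase hve⟩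
    exact (hE.pairwise_card_inter_le_one he.1 hf.1 hef).not_gt this
  have hcover : {e ∈ E | u ∈ e}.biUnion (·.erase u) = univ.erase u := by
    ext v
    simp only [mem_biUnion, mem_filter, mem_erase, mem_univ, and_true]
    constructor
    · rintro ⟨e, -, hv, -⟩
      exact hv
    · intro hv
      obtain ⟨e, ⟨he, hue, hve⟩, -⟩ := hE.2 u v hv.symm
      exact ⟨e, ⟨he, hue⟩, hv, hve⟩
  calc #{e ∈ E | u ∈ e} * (r - 1)
      = ∑ e ∈ {e ∈ E | u ∈ e}, #(e.erase u) := by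
        refine (sum_const_nat fun e he => ?_).symm
        rw [mem_filter] at he
        rw [card_erase_of_mem he.2, hE.1 he.1]
    _ = Fintype.card α - 1 := by
        rw [← card_biUnion hdisj, hcover, card_erase_of_mem (mem_univ u), card_univ]

theorem card_filter_mem [Fintype α] (hE : IsSteinerSystem r E) (hr : 2 ≤ r) {d : ℕ}
    (hα : Fintype.card α = (r - 1) * d + 1) (u : α) : #{e ∈ E | u ∈ e} = d := by
  have := hE.card_filter_mem_mul u
  rw [hα, Nat.add_sub_cancel, mul_comm (r - 1)] at this
  exact Nat.eq_of_mul_eq_mul_right (by omega) this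

theorem mul_card [Fintype α] (hE : IsSteinerSystem r E) (hr : 2 ≤ r) {d : ℕ}
    (hα : Fintype.card α = (r - 1) * d + 1) : r * #E = Fintype.card α * d := by
  rw [← sum_card (hE.card_filter_mem hr hα), sum_const_nat fun e he => hE.1 he, mul_comm]

end IsSteinerSystem

section DisjointCopies

variable [Fintype ι] [DecidableEq β]

def disjointCopies (φ : ι × α ↪ β) (E : Finset (Finset α)) : Finset (Finset β) :=
  (univ ×ˢ E).image fun p => ({p.1} ×ˢ p.2).map φ

variable {φ : ι × α ↪ β} {E : Finset (Finset α)}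

theorem mem_disjointCopies {x : Finset β} :
    x ∈ disjointCopies φ E ↔ ∃ i, ∃ e ∈ E, ({i} ×ˢ e).map φ = x := by
  simp [disjointCopies]

theorem sized_disjointCopies {r : ℕ} (hE : (E : Set (Finset α)).Sized r) :
    (disjointCopies φ E : Set (Finset β)).Sized r := by
  intro x hx
  obtain ⟨i, e, he, rfl⟩ := mem_disjointCopies.mp hx
  rw [card_map, card_product, card_singleton, one_mul, hE he]

theorem pairwise_card_inter_disjointCopies_le_one [DecidableEq α] [DecidableEq ι]
    (hE : (E : Set (Finset α)).Pairwise fun e f => #(e ∩ f) ≤ 1) :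
    (disjointCopies φ E : Set (Finset β)).Pairwise fun x y => #(x ∩ y) ≤ 1 := by
  intro x hx y hy hxy
  obtain ⟨i, e, he, rfl⟩ := mem_disjointCopies.mp hx
  obtain ⟨j, f, hf, rfl⟩ := mem_disjointCopies.mp hy
  rw [← map_inter, product_inter_product, card_map, card_product]
  by_cases hij : i = j
  · subst hij
    have hef : e ≠ f := by rintro rfl; exact hxy rfl
    rw [inter_self, card_singleton, one_mul]
    exact hE he hf hef
  · rw [singleton_inter_of_notMem (by simpa using hij), card_empty, zero_mul]
    exact zero_le_one

theorem card_disjointCopies (hE : ∅ ∉ E) : #(disjointCopies φ E) = Fintype.card ι * #E := by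
  rw [disjointCopies, card_image_of_injOn, card_product, card_univ]
  rintro ⟨i, e⟩ hie ⟨j, f⟩ - hx
  simp only [coe_product, coe_univ, Set.mem_prod, Set.mem_univ, true_and, mem_coe] at hie
  simp only [map_inj] at hx
  obtain ⟨a, ha⟩ := nonempty_iff_ne_empty.mpr (ne_of_mem_of_not_mem hie hE)
  have hij : i = j := by
    have : (i, a) ∈ {j} ×ˢ f := hx ▸ mk_mem_product (mem_singleton_self i) ha
    exact mem_singleton.mp (mem_product.mp this).1
  subst hij
  rw [singleton_product, singleton_product, map_inj] at hx
  rw [hx]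

theorem IsIntersectionConnected.card_biUnion_le_of_mem_disjointCopies [Fintype κ] [Fintype α]
    [DecidableEq α] [DecidableEq ι] {e : κ → Finset β}
    (hconn : IsIntersectionConnected e) (he : ∀ i, e i ∈ disjointCopies φ E) :
    #(univ.biUnion e) ≤ Fintype.card α := by
  choose c s _ hcs using fun i => mem_disjointCopies.mp (he i)
  rcases isEmpty_or_nonempty κ with hκ | ⟨⟨i₀⟩⟩
  · simp
  have hc (i : κ) : c i = c i₀ := hconn.constant (fun i j hij => by
    rw [← hcs i, ← hcs j, ← map_inter, product_inter_product, map_nonempty,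
      nonempty_product] at hij
    simpa using not_disjoint_iff_nonempty_inter.mpr hij.1) i i₀
  calc #(univ.biUnion e) ≤ #(({c i₀} ×ˢ univ).map φ) := by
        refine card_le_card (biUnion_subset.mpr fun i _ => ?_)
        rw [← hcs i, hc i]
        exact map_subset_map.mpr (product_subset_product subset_rfl (subset_univ _))
    _ = Fintype.card α := by simp

end DisjointCopies

/-- If t = (r−1)(k−1)+1 divides n and a Steiner system S(2,r,t) exists,
then there is a linear r-uniform hypergraph H on n vertices with r·|E(H)| = n·(k−1)
containing no copy of any linear r-tree with k edges. -/
theorem stmt_5 (r k n : ℕ) (hr : 3 ≤ r) (hk : 2 ≤ k)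
    (t : ℕ) (ht : t = (r - 1) * (k - 1) + 1)
    (hdvd : t ∣ n)
    (hsteiner : ∃ E' : Finset (Finset (Fin t)),
      (∀ e ∈ E', e.card = r) ∧
      (∀ u v : Fin t, u ≠ v → ∃! e, e ∈ E' ∧ u ∈ e ∧ v ∈ e)) :
    ∃ E : Finset (Finset (Fin n)),
      (∀ e ∈ E, e.card = r) ∧
      (∀ e ∈ E, ∀ f ∈ E, e ≠ f → (e ∩ f).card ≤ 1) ∧
      r * E.card = n * (k - 1) ∧
      ¬ ∃ e : Fin k → Finset (Fin n),
          (∀ i, e i ∈ E) ∧ Function.Injective e ∧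
          (Finset.univ.biUnion e).card = (r - 1) * k + 1 ∧
          (∀ S : Finset (Fin k), S.Nonempty → S ≠ Finset.univ →
            ∃ i ∈ S, ∃ j ∉ S, ((e i) ∩ (e j)).Nonempty) := by
  obtain ⟨E', hS⟩ := hsteiner
  change IsSteinerSystem r E' at hS
  obtain ⟨q, rfl⟩ := hdvd
  have hr2 : 2 ≤ r := by omega
  have hcard_t : Fintype.card (Fin t) = (r - 1) * (k - 1) + 1 := by rw [Fintype.card_fin, ht]
  have hempty : ∅ ∉ E' := fun h => by
    have := hS.1 h
    rw [card_empty] at this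
    omega
  let φ : Fin q × Fin t ↪ Fin (t * q) :=
    (finProdFinEquiv.trans (finCongr (mul_comm q t))).toEmbedding
  refine ⟨disjointCopies φ E', sized_disjointCopies hS.1,
    pairwise_card_inter_disjointCopies_le_one hS.pairwise_card_inter_le_one, ?_, ?_⟩
  · rw [card_disjointCopies hempty, mul_left_comm, hS.mul_card hr2 hcard_t, Fintype.card_fin,
      Fintype.card_fin]
    ring
  · rintro ⟨e, he, -, hcard, hconn : IsIntersectionConnected e⟩
    have hunion := hconn.card_biUnion_le_of_mem_disjointCopies he
    rw [hcard, hcard_t] at hunion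
    have hlt : (r - 1) * (k - 1) < (r - 1) * k := Nat.mul_lt_mul_of_pos_left (by omega) (by omega)
    omega
end

section
/- Let r ≥ 3 and let H be a linear r-uniform hypergraph on an n-element vertex set containing no copy of B_4^r. Then r·|E(H)| ≤ (r+1)·n. -/
/-!
Induct on the number of edges. If every vertex has degree at most `r + 1`, double counting gives
`r |E| = ∑ deg ≤ (r + 1) |V(E)|`. Otherwise pick a vertex `v` of degree at least `r + 2`. By
linearity the edges through `v` pairwise meet only in `v`, so an edge `f` avoiding `v` meets at
most `|f| = r` of them; if `f` met one at all, two others would be disjoint from `f` and form a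
`B₄` with it. Hence the star at `v` is vertex-disjoint from the remaining edges. The star spans
`1 + (r - 1) s` vertices for `s` edges, which pays for `r s` because `(r + 1)(r - 1) ≥ r`, and the
remaining edges are handled by induction.
-/

open Finset

section

variable {V : Type*} [DecidableEq V]

def IsLinearFamily (E : Finset (Finset V)) : Prop :=
  ∀ e ∈ E, ∀ f ∈ E, e ≠ f → #(e ∩ f) ≤ 1

def HasB4 (E : Finset (Finset V)) : Prop :=
  ∃ e₁ ∈ E, ∃ e₂ ∈ E, ∃ e₃ ∈ E, ∃ f ∈ E, ∃ v : V,
    e₁ ≠ e₂ ∧ e₁ ≠ e₃ ∧ e₁ ≠ f ∧ e₂ ≠ e₃ ∧ e₂ ≠ f ∧ e₃ ≠ f ∧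
    v ∈ e₁ ∧ v ∈ e₂ ∧ v ∈ e₃ ∧ v ∉ f ∧
    (f ∩ e₁).Nonempty ∧ f ∩ e₂ = ∅ ∧ f ∩ e₃ = ∅

variable {E F : Finset (Finset V)} {r : ℕ}

lemma IsLinearFamily.mono (hF : IsLinearFamily F) (h : E ⊆ F) : IsLinearFamily E :=
  fun e he f hf => hF e (h he) f (h hf)

lemma HasB4.mono (hE : HasB4 E) (h : E ⊆ F) : HasB4 F := by
  obtain ⟨e₁, h₁, e₂, h₂, e₃, h₃, f, hf, rest⟩ := hE
  exact ⟨e₁, h h₁, e₂, h h₂, e₃, h h₃, f, h hf, rest⟩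

lemma IsLinearFamily.eq_of_mem_inter (hE : IsLinearFamily E) {e f : Finset V} (he : e ∈ E)
    (hf : f ∈ E) (hef : e ≠ f) {v x : V} (hv : v ∈ e ∩ f) (hx : x ∈ e ∩ f) : x = v :=
  card_le_one.mp (hE e he f hf hef) x hx v hv

lemma mul_card_le_of_degree_le (hE : (E : Set (Finset V)).Sized r) {d : ℕ}
    (hdeg : ∀ v, #{e ∈ E | v ∈ e} ≤ d) : r * #E ≤ d * #(E.biUnion id) :=
  calc r * #E = ∑ e ∈ E, #e := by
        rw [sum_congr rfl fun e he => hE he, sum_const, smul_eq_mul, mul_comm]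
    _ = ∑ e ∈ E, #(E.biUnion id ∩ e) := sum_congr rfl fun e he => congrArg card
        (inter_eq_right.mpr (show e ⊆ E.biUnion id from subset_biUnion_of_mem id he)).symm
    _ ≤ #(E.biUnion id) * d := sum_card_inter_le fun v _ => hdeg v
    _ = d * #(E.biUnion id) := mul_comm _ _

/-- The traces `f ∩ e` of the star edges meeting `f` are nonempty and pairwise disjoint subsets
of `f`, since two star edges share only `v ∉ f`. -/
lemma IsLinearFamily.card_star_meeting_le (hE : IsLinearFamily E) {f : Finset V} {v : V}
    (hv : v ∉ f) : #{e ∈ {e ∈ E | v ∈ e} | (f ∩ e).Nonempty} ≤ #f := by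
  set T := {e ∈ {e ∈ E | v ∈ e} | (f ∩ e).Nonempty}
  have hdisj : (T : Set (Finset V)).PairwiseDisjoint (f ∩ ·) := by
    intro e he e' he' hne
    simp only [T, mem_coe, mem_filter] at he he'
    refine disjoint_left.mpr fun x hx hx' => hv ?_
    rw [mem_inter] at hx hx'
    have hxv : x = v := hE.eq_of_mem_inter he.1.1 he'.1.1 hne
      (mem_inter.mpr ⟨he.1.2, he'.1.2⟩) (mem_inter.mpr ⟨hx.2, hx'.2⟩)
    exact hxv ▸ hx.1
  calc #T ≤ #(T.biUnion (f ∩ ·)) := card_le_card_biUnion hdisj fun e he => (mem_filter.mp he).2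
    _ ≤ #f := card_le_card (biUnion_subset.mpr fun e _ => inter_subset_left)

lemma IsLinearFamily.disjoint_of_not_hasB4 (hE : IsLinearFamily E) (hB : ¬ HasB4 E) {v : V}
    {f : Finset V} (hf : f ∈ E) (hv : v ∉ f) (hdeg : #f + 2 ≤ #{e ∈ E | v ∈ e})
    {e₁ : Finset V} (he₁ : e₁ ∈ E) (hve₁ : v ∈ e₁) : Disjoint f e₁ := by
  by_contra hmeet
  rw [not_disjoint_iff_nonempty_inter] at hmeet
  have hmiss : 1 < #{e ∈ {e ∈ E | v ∈ e} | ¬ (f ∩ e).Nonempty} := by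
    have hsplit := card_filter_add_card_filter_not (s := {e ∈ E | v ∈ e})
      fun e => (f ∩ e).Nonempty
    have hmeeting := hE.card_star_meeting_le (E := E) hv
    omega
  obtain ⟨e₂, he₂, e₃, he₃, h₂₃⟩ := one_lt_card.mp hmiss
  simp only [mem_filter, not_nonempty_iff_eq_empty] at he₂ he₃
  have hne : ∀ e, v ∈ e → e ≠ f := fun e he hef => hv (hef ▸ he)
  refine hB ⟨e₁, he₁, e₂, he₂.1.1, e₃, he₃.1.1, f, hf, v, ?_, ?_, hne e₁ hve₁, h₂₃,
    hne e₂ he₂.1.2, hne e₃ he₃.1.2, hve₁, he₂.1.2, he₃.1.2, hv, hmeet, he₂.2, he₃.2⟩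
  · rintro rfl; exact hmeet.ne_empty he₂.2
  · rintro rfl; exact hmeet.ne_empty he₃.2

lemma IsLinearFamily.card_biUnion_star (hE : IsLinearFamily E)
    (hr : (E : Set (Finset V)).Sized r) {v : V} (hS : {e ∈ E | v ∈ e}.Nonempty) :
    #({e ∈ E | v ∈ e}.biUnion id) = (r - 1) * #{e ∈ E | v ∈ e} + 1 := by
  set S := {e ∈ E | v ∈ e}
  have hmem : ∀ e ∈ S, e ∈ E ∧ v ∈ e := fun e he => mem_filter.mp he
  have hdisj : (S : Set (Finset V)).PairwiseDisjoint (·.erase v) := by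
    intro e he e' he' hne
    refine disjoint_left.mpr fun x hx hx' => (mem_erase.mp hx).1 ?_
    exact hE.eq_of_mem_inter (hmem e he).1 (hmem e' he').1 hne
      (mem_inter.mpr ⟨(hmem e he).2, (hmem e' he').2⟩)
      (mem_inter.mpr ⟨mem_of_mem_erase hx, mem_of_mem_erase hx'⟩)
  have hunion : S.biUnion id = insert v (S.biUnion (·.erase v)) := by
    obtain ⟨e₀, he₀⟩ := hS
    ext x
    by_cases hxv : x = v
    · subst hxv
      simpa using ⟨e₀, he₀, (hmem e₀ he₀).2⟩
    · simp [hxv]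
  rw [hunion, card_insert_of_notMem (by simp), card_biUnion hdisj,
    sum_congr rfl fun e he => by rw [card_erase_of_mem (hmem e he).2, hr (hmem e he).1],
    sum_const, smul_eq_mul, mul_comm]

lemma mul_le_succ_mul_one_add_pred_mul (hr : 2 ≤ r) (s : ℕ) :
    r * s ≤ (r + 1) * ((r - 1) * s + 1) := by
  obtain ⟨k, rfl⟩ : ∃ k, r = k + 2 := ⟨r - 2, by omega⟩
  rw [show k + 2 - 1 = k + 1 by omega]
  nlinarith [Nat.zero_le (k * k * s), Nat.zero_le (k * s)]

theorem mul_card_le_succ_mul_card_biUnion (hr : 2 ≤ r) (E : Finset (Finset V))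
    (hU : (E : Set (Finset V)).Sized r) (hL : IsLinearFamily E) (hB : ¬ HasB4 E) :
    r * #E ≤ (r + 1) * #(E.biUnion id) := by
  induction E using Finset.strongInduction with
  | H E ih =>
    by_cases hdeg : ∀ v, #{e ∈ E | v ∈ e} ≤ r + 1
    · exact mul_card_le_of_degree_le hU hdeg
    push Not at hdeg
    obtain ⟨v, hv⟩ := hdeg
    set S := {e ∈ E | v ∈ e}
    have hSE : S ⊆ E := filter_subset _ _
    have hS : S.Nonempty := card_pos.mp (by omega)
    have hstar : r * #S ≤ (r + 1) * #(S.biUnion id) := by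
      rw [hL.card_biUnion_star hU hS]
      exact mul_le_succ_mul_one_add_pred_mul hr _
    have hrest : r * #(E \ S) ≤ (r + 1) * #((E \ S).biUnion id) :=
      ih _ (sdiff_ssubset hSE hS) (hU.mono (coe_subset.mpr sdiff_subset)) (hL.mono sdiff_subset)
        fun h => hB (h.mono sdiff_subset)
    have hdisj : Disjoint (S.biUnion id) ((E \ S).biUnion id) := by
      refine (disjoint_biUnion_left _ _ _).mpr fun e he =>
        (disjoint_biUnion_right _ _ _).mpr fun f hf => ?_
      obtain ⟨hfE, hfS⟩ := mem_sdiff.mp hf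
      have hvf : v ∉ f := fun h => hfS (mem_filter.mpr ⟨hfE, h⟩)
      exact (hL.disjoint_of_not_hasB4 hB hfE hvf (by rw [hU hfE]; exact hv)
        (hSE he) (mem_filter.mp he).2).symm
    have hcard : #(E.biUnion id) = #(S.biUnion id) + #((E \ S).biUnion id) := by
      rw [← card_union_of_disjoint hdisj, ← union_biUnion, union_sdiff_of_subset hSE]
    calc r * #E = r * #S + r * #(E \ S) := by rw [← card_sdiff_add_card_eq_card hSE]; ring
      _ ≤ (r + 1) * #(S.biUnion id) + (r + 1) * #((E \ S).biUnion id) := add_le_add hstar hrest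
      _ = (r + 1) * #(E.biUnion id) := by rw [hcard, mul_add]

end

/-- A linear r-uniform hypergraph on n vertices with no copy of B_4^r
satisfies r·|E(H)| ≤ (r+1)·n. -/
theorem stmt_6 {V : Type*} [Fintype V] [DecidableEq V]
    (r n : ℕ) (hr : 3 ≤ r)
    (hn : Fintype.card V = n)
    (E : Finset (Finset V))
    (huniform : ∀ e ∈ E, e.card = r)
    (hlinear : ∀ e ∈ E, ∀ f ∈ E, e ≠ f → (e ∩ f).card ≤ 1)
    (hB4free : ¬ ∃ e₁ ∈ E, ∃ e₂ ∈ E, ∃ e₃ ∈ E, ∃ f ∈ E, ∃ v : V,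
      e₁ ≠ e₂ ∧ e₁ ≠ e₃ ∧ e₁ ≠ f ∧ e₂ ≠ e₃ ∧ e₂ ≠ f ∧ e₃ ≠ f ∧
      v ∈ e₁ ∧ v ∈ e₂ ∧ v ∈ e₃ ∧ v ∉ f ∧
      (f ∩ e₁).Nonempty ∧ f ∩ e₂ = ∅ ∧ f ∩ e₃ = ∅) :
    r * E.card ≤ (r + 1) * n :=
  calc r * #E ≤ (r + 1) * #(E.biUnion id) :=
        mul_card_le_succ_mul_card_biUnion (by omega) E (fun e he => huniform e he) hlinear hB4free
    _ ≤ (r + 1) * n := by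
        gcongr
        exact hn ▸ card_le_univ _
end

section
/- Let r ≥ 3 and let H be a linear r-uniform hypergraph containing no copy of B_4^r in which every vertex has degree at least 2. Then every vertex of H has degree at most r+1. -/
/-!
Suppose some vertex `v` had degree at least `r + 2`. Take an edge `e₁ ∋ v`, a second vertex
`u ∈ e₁`, and (minimum degree two) another edge `f ∋ u`; linearity forces `v ∉ f`. Two edges
through `v` meet only in `v`, so each vertex of `f` lies on at most one of them: at most `r` edges
through `v` meet `f`. Two of the remaining ones, `e₂` and `e₃`, miss `f`, and `e₁, e₂, e₃, f`
form a copy of `B₄^r`.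
-/

open Finset

section

variable {V : Type*} [DecidableEq V]

def IsLinear (E : Finset (Finset V)) : Prop :=
  ∀ e ∈ E, ∀ f ∈ E, e ≠ f → #(e ∩ f) ≤ 1

namespace IsLinear

variable {E : Finset (Finset V)}

theorem eq_of_mem_of_mem (hE : IsLinear E) {e f : Finset V} (he : e ∈ E) (hf : f ∈ E)
    {x y : V} (hxy : x ≠ y) (hxe : x ∈ e) (hye : y ∈ e) (hxf : x ∈ f) (hyf : y ∈ f) :
    e = f := by
  by_contra hne
  have hle := hE e he f hf hne
  have hlt : 1 < #(e ∩ f) :=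
    one_lt_card.mpr ⟨x, mem_inter.mpr ⟨hxe, hxf⟩, y, mem_inter.mpr ⟨hye, hyf⟩, hxy⟩
  omega

theorem card_filter_inter_nonempty_le (hE : IsLinear E) {v : V} {f : Finset V} (hvf : v ∉ f) :
    #{e ∈ {e ∈ E | v ∈ e} | (f ∩ e).Nonempty} ≤ #f := by
  refine card_le_card_of_forall_subsingleton (fun e x => x ∈ e) ?_ ?_
  · intro e he
    obtain ⟨x, hx⟩ := (mem_filter.mp he).2
    exact ⟨x, mem_inter.mp hx⟩
  · intro x hxf a ⟨ha, hxa⟩ b ⟨hb, hxb⟩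
    simp only [mem_filter] at ha hb
    have hxv : x ≠ v := fun h => hvf (h ▸ hxf)
    exact hE.eq_of_mem_of_mem ha.1.1 hb.1.1 hxv hxa ha.1.2 hxb hb.1.2

theorem exists_two_through_inter_eq_empty (hE : IsLinear E) {v : V} {f : Finset V} (hvf : v ∉ f)
    (hdeg : #f + 2 ≤ #{e ∈ E | v ∈ e}) :
    ∃ e₂ ∈ E, ∃ e₃ ∈ E, e₂ ≠ e₃ ∧ v ∈ e₂ ∧ v ∈ e₃ ∧ f ∩ e₂ = ∅ ∧ f ∩ e₃ = ∅ := by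
  have hsplit :=
    card_filter_add_card_filter_not (s := {e ∈ E | v ∈ e}) (fun e => (f ∩ e).Nonempty)
  have hmeet := hE.card_filter_inter_nonempty_le hvf
  obtain ⟨e₂, he₂, e₃, he₃, hne⟩ :=
    one_lt_card.mp (show 1 < #{e ∈ {e ∈ E | v ∈ e} | ¬(f ∩ e).Nonempty} by omega)
  simp only [mem_filter, not_nonempty_iff_eq_empty] at he₂ he₃
  exact ⟨e₂, he₂.1.1, e₃, he₃.1.1, hne, he₂.1.2, he₃.1.2, he₂.2, he₃.2⟩

end IsLinear

end

theorem stmt_7_general {V : Type*} [DecidableEq V]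
    (r : ℕ) (hr : 3 ≤ r)
    (E : Finset (Finset V))
    (huniform : ∀ e ∈ E, e.card = r)
    (hlinear : ∀ e ∈ E, ∀ f ∈ E, e ≠ f → (e ∩ f).card ≤ 1)
    (hB4free : ¬ ∃ e₁ ∈ E, ∃ e₂ ∈ E, ∃ e₃ ∈ E, ∃ f ∈ E, ∃ v : V,
      e₁ ≠ e₂ ∧ e₁ ≠ e₃ ∧ e₁ ≠ f ∧ e₂ ≠ e₃ ∧ e₂ ≠ f ∧ e₃ ≠ f ∧
      v ∈ e₁ ∧ v ∈ e₂ ∧ v ∈ e₃ ∧ v ∉ f ∧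
      (f ∩ e₁).Nonempty ∧ f ∩ e₂ = ∅ ∧ f ∩ e₃ = ∅)
    (hmindeg : ∀ v : V, 2 ≤ (E.filter (fun e => v ∈ e)).card) :
    ∀ v : V, (E.filter (fun e => v ∈ e)).card ≤ r + 1 := by
  intro v
  by_contra! hdeg
  have hE : IsLinear E := hlinear
  obtain ⟨e₁, he₁⟩ := card_pos.mp (show 0 < #{e ∈ E | v ∈ e} by omega)
  obtain ⟨he₁E, hve₁⟩ := mem_filter.mp he₁
  obtain ⟨u, hue₁, huv⟩ := exists_mem_ne (show 1 < #e₁ by rw [huniform e₁ he₁E]; omega) v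
  obtain ⟨f, hf, hfne⟩ :=
    exists_mem_ne (show 1 < #{e ∈ E | u ∈ e} by have := hmindeg u; omega) e₁
  obtain ⟨hfE, huf⟩ := mem_filter.mp hf
  have hvf : v ∉ f := fun hvf => hfne (hE.eq_of_mem_of_mem hfE he₁E huv huf hvf hue₁ hve₁)
  obtain ⟨e₂, he₂E, e₃, he₃E, he₂₃, hve₂, hve₃, hfe₂, hfe₃⟩ :=
    hE.exists_two_through_inter_eq_empty hvf (by rw [huniform f hfE]; omega)
  have hfe₁ : (f ∩ e₁).Nonempty := ⟨u, mem_inter.mpr ⟨huf, hue₁⟩⟩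
  refine hB4free ⟨e₁, he₁E, e₂, he₂E, e₃, he₃E, f, hfE, v, ?_, ?_, hfne.symm, he₂₃, ?_, ?_,
    hve₁, hve₂, hve₃, hvf, hfe₁, hfe₂, hfe₃⟩
  · rintro rfl; simp [hfe₂] at hfe₁
  · rintro rfl; simp [hfe₃] at hfe₁
  · rintro rfl; exact hvf hve₂
  · rintro rfl; exact hvf hve₃

/-- In a linear r-uniform B_4^r-free hypergraph with minimum degree at least 2,
every vertex has degree at most r+1. -/
theorem stmt_7 {V : Type*} [Fintype V] [DecidableEq V]
    (r : ℕ) (hr : 3 ≤ r)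
    (E : Finset (Finset V))
    (huniform : ∀ e ∈ E, e.card = r)
    (hlinear : ∀ e ∈ E, ∀ f ∈ E, e ≠ f → (e ∩ f).card ≤ 1)
    (hB4free : ¬ ∃ e₁ ∈ E, ∃ e₂ ∈ E, ∃ e₃ ∈ E, ∃ f ∈ E, ∃ v : V,
      e₁ ≠ e₂ ∧ e₁ ≠ e₃ ∧ e₁ ≠ f ∧ e₂ ≠ e₃ ∧ e₂ ≠ f ∧ e₃ ≠ f ∧
      v ∈ e₁ ∧ v ∈ e₂ ∧ v ∈ e₃ ∧ v ∉ f ∧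
      (f ∩ e₁).Nonempty ∧ f ∩ e₂ = ∅ ∧ f ∩ e₃ = ∅)
    (hmindeg : ∀ v : V, 2 ≤ (E.filter (fun e => v ∈ e)).card) :
    ∀ v : V, (E.filter (fun e => v ∈ e)).card ≤ r + 1 :=
  stmt_7_general r hr E huniform hlinear hB4free hmindeg
end

section
/- Let r ≥ 3 and let H be a connected linear r-uniform hypergraph on an n-element vertex set (n ≥ 1) containing no copy of B_4^r and satisfying r·|E(H)| = (r+1)·n. Then n = r² and every pair of distinct vertices of H is contained in exactly one hyperedge, i.e., H is a Steiner system S(2,r,r²). -/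
/-- A connected linear r-uniform B_4^r-free hypergraph on n ≥ 1 vertices with
r·|E(H)| = (r+1)·n satisfies n = r² and is a Steiner system S(2,r,r²). -/
theorem stmt_12 {V : Type*} [Fintype V] [DecidableEq V]
    (r n : ℕ) (hr : 3 ≤ r) (hn1 : 1 ≤ n)
    (hn : Fintype.card V = n)
    (E : Finset (Finset V))
    (huniform : ∀ e ∈ E, e.card = r)
    (hlinear : ∀ e ∈ E, ∀ f ∈ E, e ≠ f → (e ∩ f).card ≤ 1)
    (hconn : ∀ u w : V, ∃ (m : ℕ) (e : Fin (m + 1) → Finset V),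
      (∀ i, e i ∈ E) ∧ u ∈ e 0 ∧ w ∈ e (Fin.last m) ∧
      ∀ i : Fin m, ((e i.castSucc) ∩ (e i.succ)).Nonempty)
    (hB4free : ¬ ∃ e₁ ∈ E, ∃ e₂ ∈ E, ∃ e₃ ∈ E, ∃ f ∈ E, ∃ v : V,
      e₁ ≠ e₂ ∧ e₁ ≠ e₃ ∧ e₁ ≠ f ∧ e₂ ≠ e₃ ∧ e₂ ≠ f ∧ e₃ ≠ f ∧
      v ∈ e₁ ∧ v ∈ e₂ ∧ v ∈ e₃ ∧ v ∉ f ∧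
      (f ∩ e₁).Nonempty ∧ f ∩ e₂ = ∅ ∧ f ∩ e₃ = ∅)
    (hcount : r * E.card = (r + 1) * n) :
    n = r ^ 2 ∧ ∀ u v : V, u ≠ v → ∃! e, e ∈ E ∧ u ∈ e ∧ v ∈ e := by
  classical
  -- every vertex lies in some edge
  have hcov : ∀ v : V, ∃ e ∈ E, v ∈ e := by
    intro v
    obtain ⟨m, e, he, hu, -, -⟩ := hconn v v
    exact ⟨e 0, he 0, hu⟩
  -- two distinct edges through a common vertex meet exactly there
  have hpair : ∀ {e f : Finset V} {v : V}, e ∈ E → f ∈ E → e ≠ f → v ∈ e → v ∈ f →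
      e ∩ f = {v} := by
    intro e f v he hf hne hve hvf
    have h1 : v ∈ e ∩ f := Finset.mem_inter.2 ⟨hve, hvf⟩
    have h2 := Finset.card_le_one.1 (hlinear e he f hf hne)
    exact Finset.eq_singleton_iff_unique_mem.2 ⟨h1, fun x hx => h2 x hx v h1⟩
  -- closure lemma via connectivity
  have hclosure : ∀ (S : Finset V) (v : V), v ∈ S →
      (∀ f ∈ E, (f ∩ S).Nonempty → f ⊆ S) → ∀ w : V, w ∈ S := by
    intro S v hvS hcl w
    obtain ⟨m, e, he, hve, hwe, hadj⟩ := hconn v w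
    have key : ∀ k : ℕ, ∀ hk : k < m + 1, e ⟨k, hk⟩ ⊆ S := by
      intro k
      induction k with
      | zero =>
        intro hk
        have h0 : (⟨0, hk⟩ : Fin (m+1)) = 0 := by ext; simp
        rw [h0]
        exact hcl _ (he 0) ⟨v, Finset.mem_inter.2 ⟨hve, hvS⟩⟩
      | succ k ih =>
        intro hk
        have hkm : k < m := by omega
        have h1 : e ⟨k, by omega⟩ ⊆ S := ih (by omega)
        obtain ⟨x, hx⟩ := hadj ⟨k, hkm⟩
        rw [Finset.mem_inter] at hx
        have hcast : (⟨k, hkm⟩ : Fin m).castSucc = (⟨k, by omega⟩ : Fin (m+1)) := rfl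
        have hsucc : (⟨k, hkm⟩ : Fin m).succ = (⟨k+1, hk⟩ : Fin (m+1)) := rfl
        rw [hcast, hsucc] at hx
        exact hcl _ (he _) ⟨x, Finset.mem_inter.2 ⟨hx.2, h1 hx.1⟩⟩
    have hlast : e (Fin.last m) ⊆ S := key m (Nat.lt_succ_self m)
    exact hlast hwe
  -- the degree function
  set D : V → ℕ := fun v => (E.filter (fun e => v ∈ e)).card with hD
  -- core lemma from B4-freeness and linearity
  have hcore : ∀ (v : V) (f : Finset V), f ∈ E → v ∉ f →
      ∀ e₁ ∈ E, v ∈ e₁ → (f ∩ e₁).Nonempty →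
      D v ≤ r + 1 ∧ (r + 1 ≤ D v → ∀ u ∈ f, ∃ e ∈ E, v ∈ e ∧ u ∈ e) := by
    intro v f hf hvf e₁ he₁ hve₁ hfe₁
    set A := E.filter (fun e => v ∈ e ∧ (f ∩ e).Nonempty) with hA
    set B := E.filter (fun e => v ∈ e ∧ ¬(f ∩ e).Nonempty) with hB
    have hAmem : ∀ {e : Finset V}, e ∈ A → e ∈ E ∧ v ∈ e ∧ (f ∩ e).Nonempty := by
      intro e h
      rw [hA] at h
      exact Finset.mem_filter.1 h
    have hBmem : ∀ {e : Finset V}, e ∈ B → e ∈ E ∧ v ∈ e ∧ ¬(f ∩ e).Nonempty := by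
      intro e h
      rw [hB] at h
      exact Finset.mem_filter.1 h
    have hdisjAB : Disjoint A B := by
      rw [Finset.disjoint_left]
      intro a ha hb
      exact (hBmem hb).2.2 (hAmem ha).2.2
    have hunion : A ∪ B = E.filter (fun e => v ∈ e) := by
      rw [hA, hB]
      ext a
      simp only [Finset.mem_union, Finset.mem_filter]
      tauto
    have hAB : A.card + B.card = D v := by
      rw [← Finset.card_union_of_disjoint hdisjAB, hunion, hD]
    have hB1 : B.card ≤ 1 := by
      by_contra h
      have hBlt : 1 < B.card := by omega
      obtain ⟨e₂, he₂, e₃, he₃, hne⟩ := Finset.one_lt_card.1 hBlt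
      obtain ⟨he₂, hve₂, hfe₂⟩ := hBmem he₂
      obtain ⟨he₃, hve₃, hfe₃⟩ := hBmem he₃
      apply hB4free
      refine ⟨e₁, he₁, e₂, he₂, e₃, he₃, f, hf, v, ?_, ?_, ?_, hne, ?_, ?_,
        hve₁, hve₂, hve₃, hvf, hfe₁, ?_, ?_⟩
      · rintro rfl; exact hfe₂ hfe₁
      · rintro rfl; exact hfe₃ hfe₁
      · rintro rfl; exact hvf hve₁
      · rintro rfl; exact hvf hve₂
      · rintro rfl; exact hvf hve₃
      · exact Finset.not_nonempty_iff_eq_empty.1 hfe₂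
      · exact Finset.not_nonempty_iff_eq_empty.1 hfe₃
    set φ : Finset V → V := fun e => if h : (f ∩ e).Nonempty then h.choose else v with hφ
    have hφmem : ∀ e ∈ A, φ e ∈ f ∩ e := by
      intro e he
      obtain ⟨-, -, hfe⟩ := hAmem he
      rw [hφ]
      simp only [dif_pos hfe]
      exact hfe.choose_spec
    have hφinj : Set.InjOn φ ↑A := by
      intro e he e' he' heq
      rw [Finset.mem_coe] at he he'
      by_contra hne
      have h1 := Finset.mem_inter.1 (hφmem e he)
      have h2 := Finset.mem_inter.1 (hφmem e' he')
      obtain ⟨heE, heA, -⟩ := hAmem he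
      obtain ⟨heE', heA', -⟩ := hAmem he'
      have hmem : φ e ∈ e ∩ e' := Finset.mem_inter.2 ⟨h1.2, heq ▸ h2.2⟩
      rw [hpair heE heE' hne heA heA'] at hmem
      rw [Finset.mem_singleton] at hmem
      exact hvf (hmem ▸ h1.1)
    have hAcard : A.card ≤ r := by
      have h := Finset.card_le_card_of_injOn φ
        (fun e he => (Finset.mem_inter.1 (hφmem e he)).1) hφinj
      rwa [huniform f hf] at h
    refine ⟨by omega, ?_⟩
    intro hge u hu
    have hAr : r ≤ A.card := by omega
    have himg : A.image φ = f := by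
      apply Finset.eq_of_subset_of_card_le
      · intro x hx
        obtain ⟨e, he, rfl⟩ := Finset.mem_image.1 hx
        exact (Finset.mem_inter.1 (hφmem e he)).1
      · rw [Finset.card_image_of_injOn hφinj, huniform f hf]
        exact hAr
    have hu' : u ∈ A.image φ := himg ▸ hu
    obtain ⟨e, he, heq⟩ := Finset.mem_image.1 hu'
    have hm := Finset.mem_inter.1 (hφmem e he)
    obtain ⟨heE, heA, -⟩ := hAmem he
    exact ⟨e, heE, heA, heq ▸ hm.2⟩
  -- if some edge misses v, then some edge misses v but meets the star of v
  have hexf : ∀ v : V, (∃ g ∈ E, v ∉ g) →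
      ∃ f ∈ E, v ∉ f ∧ ∃ e ∈ E, v ∈ e ∧ (f ∩ e).Nonempty := by
    rintro v ⟨g, hg, hvg⟩
    by_contra hno
    push_neg at hno
    set S := (E.filter (fun e => v ∈ e)).biUnion id with hS
    have hvS : v ∈ S := by
      obtain ⟨e, he, hve⟩ := hcov v
      exact Finset.mem_biUnion.2 ⟨e, Finset.mem_filter.2 ⟨he, hve⟩, hve⟩
    have hcl : ∀ f ∈ E, (f ∩ S).Nonempty → f ⊆ S := by
      rintro f hf ⟨x, hx⟩
      rw [Finset.mem_inter] at hx
      obtain ⟨e, he, hxe⟩ := Finset.mem_biUnion.1 hx.2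
      rw [Finset.mem_filter] at he
      by_cases hvf : v ∈ f
      · exact Finset.subset_biUnion_of_mem id (Finset.mem_filter.2 ⟨hf, hvf⟩)
      · exact absurd ⟨x, Finset.mem_inter.2 ⟨hx.1, hxe⟩⟩
          (Finset.not_nonempty_iff_eq_empty.2 (hno f hf hvf e he.1 he.2))
    have hall := hclosure S v hvS hcl
    obtain ⟨u, hu⟩ : g.Nonempty := Finset.card_pos.1 (by rw [huniform g hg]; omega)
    obtain ⟨e, he, hue⟩ := Finset.mem_biUnion.1 (hall u)
    rw [Finset.mem_filter] at he
    exact Finset.not_nonempty_iff_eq_empty.2 (hno g hg hvg e he.1 he.2) ⟨u, Finset.mem_inter.2 ⟨hu, hue⟩⟩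
  -- maximum degree at most r+1
  have hdegle : ∀ v : V, D v ≤ r + 1 := by
    intro v
    by_cases hg : ∃ g ∈ E, v ∉ g
    · obtain ⟨f, hf, hvf, e, he, hve, hne⟩ := hexf v hg
      exact (hcore v f hf hvf e he hve hne).1
    · -- all edges contain v : contradiction with counting
      exfalso
      push_neg at hg
      set T := E.biUnion (fun e => e.erase v) with hT
      have hdisj : ∀ e ∈ E, ∀ e' ∈ E, e ≠ e' → Disjoint (e.erase v) (e'.erase v) := by
        intro e he e' he' hne
        rw [Finset.disjoint_left]
        intro x hx hx'
        rw [Finset.mem_erase] at hx hx'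
        have : x ∈ e ∩ e' := Finset.mem_inter.2 ⟨hx.2, hx'.2⟩
        rw [hpair he he' hne (hg e he) (hg e' he')] at this
        exact hx.1 (Finset.mem_singleton.1 this)
      have herase : ∀ e ∈ E, (e.erase v).card = r - 1 := by
        intro e he
        rw [Finset.card_erase_of_mem (hg e he), huniform e he]
      have hTcard : T.card = E.card * (r - 1) := by
        rw [hT, Finset.card_biUnion hdisj, Finset.sum_congr rfl herase,
          Finset.sum_const, smul_eq_mul]
      have hvT : v ∉ T := by
        rw [hT]
        simp only [Finset.mem_biUnion, Finset.mem_erase, not_exists]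
        rintro e ⟨-, h, -⟩
        exact h rfl
      have hle : 1 + E.card * (r - 1) ≤ n := by
        have h1 : insert v T ⊆ Finset.univ := Finset.subset_univ _
        have h2 := Finset.card_le_card h1
        rw [Finset.card_insert_of_notMem hvT, hTcard, Finset.card_univ, hn] at h2
        omega
      have hE1 : 1 ≤ E.card := by
        obtain ⟨e, he, -⟩ := hcov v
        exact Finset.card_pos.2 ⟨e, he⟩
      obtain ⟨s, rfl⟩ : ∃ s, r = s + 3 := ⟨r - 3, by omega⟩
      have hrs : s + 3 - 1 = s + 2 := by omega
      rw [hrs] at hle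
      nlinarith [hle, hcount, hE1]
  -- degree sum
  have hsum : ∑ v : V, D v = r * E.card := by
    have h1 : ∑ v : V, D v = ∑ v : V, ∑ e ∈ E, (if v ∈ e then 1 else 0) := by
      refine Finset.sum_congr rfl fun v _ => ?_
      rw [hD]
      simp only
      rw [Finset.card_filter]
    rw [h1, Finset.sum_comm]
    have h2 : ∀ e ∈ E, (∑ v : V, if v ∈ e then 1 else 0) = r := by
      intro e he
      rw [← Finset.card_filter]
      rw [show Finset.univ.filter (fun v => v ∈ e) = e from by ext x; simp]
      exact huniform e he
    rw [Finset.sum_congr rfl h2, Finset.sum_const, smul_eq_mul, mul_comm]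
  -- every degree is exactly r+1
  have hdegeq : ∀ v : V, D v = r + 1 := by
    by_contra h
    push_neg at h
    obtain ⟨v₀, hv₀⟩ := h
    have hlt : D v₀ < r + 1 := lt_of_le_of_ne (hdegle v₀) hv₀
    have hsum2 : ∑ v : V, D v < ∑ _v : V, (r + 1) :=
      Finset.sum_lt_sum (fun v _ => hdegle v) ⟨v₀, Finset.mem_univ _, hlt⟩
    rw [hsum, Finset.sum_const, Finset.card_univ, hn, smul_eq_mul, hcount, mul_comm] at hsum2
    exact lt_irrefl _ hsum2
  -- the main structure result for every vertex
  have hkey : ∀ v : V, n = r ^ 2 ∧ ∀ w : V, ∃ e ∈ E, v ∈ e ∧ w ∈ e := by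
    intro v
    set S := (E.filter (fun e => v ∈ e)).biUnion id with hS
    have hvS : v ∈ S := by
      obtain ⟨e, he, hve⟩ := hcov v
      exact Finset.mem_biUnion.2 ⟨e, Finset.mem_filter.2 ⟨he, hve⟩, hve⟩
    have hcl : ∀ f ∈ E, (f ∩ S).Nonempty → f ⊆ S := by
      rintro f hf ⟨x, hx⟩
      rw [Finset.mem_inter] at hx
      obtain ⟨e, he, hxe⟩ := Finset.mem_biUnion.1 hx.2
      rw [Finset.mem_filter] at he
      by_cases hvf : v ∈ f
      · exact Finset.subset_biUnion_of_mem id (Finset.mem_filter.2 ⟨hf, hvf⟩)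
      · have h2 := (hcore v f hf hvf e he.1 he.2
          ⟨x, Finset.mem_inter.2 ⟨hx.1, hxe⟩⟩).2 (le_of_eq (hdegeq v).symm)
        intro u hu
        obtain ⟨e', he', hve', hue'⟩ := h2 u hu
        exact Finset.mem_biUnion.2 ⟨e', Finset.mem_filter.2 ⟨he', hve'⟩, hue'⟩
    have hallS : ∀ w : V, w ∈ S := hclosure S v hvS hcl
    constructor
    · -- n = r²
      set T := (E.filter (fun e => v ∈ e)).biUnion (fun e => e.erase v) with hT
      have hdisj : ∀ e ∈ E.filter (fun e => v ∈ e), ∀ e' ∈ E.filter (fun e => v ∈ e),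
          e ≠ e' → Disjoint (e.erase v) (e'.erase v) := by
        intro e he e' he' hne
        rw [Finset.mem_filter] at he he'
        rw [Finset.disjoint_left]
        intro x hx hx'
        rw [Finset.mem_erase] at hx hx'
        have hmem : x ∈ e ∩ e' := Finset.mem_inter.2 ⟨hx.2, hx'.2⟩
        rw [hpair he.1 he'.1 hne he.2 he'.2] at hmem
        exact hx.1 (Finset.mem_singleton.1 hmem)
      have herase : ∀ e ∈ E.filter (fun e => v ∈ e), (e.erase v).card = r - 1 := by
        intro e he
        rw [Finset.mem_filter] at he
        rw [Finset.card_erase_of_mem he.2, huniform e he.1]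
      have hTcard : T.card = (r + 1) * (r - 1) := by
        rw [hT, Finset.card_biUnion hdisj, Finset.sum_congr rfl herase,
          Finset.sum_const, smul_eq_mul,
          show (E.filter (fun e => v ∈ e)).card = D v from rfl, hdegeq v, mul_comm]
      have hvT : v ∉ T := by
        rw [hT]
        simp only [Finset.mem_biUnion, Finset.mem_erase, not_exists]
        rintro e ⟨-, h, -⟩
        exact h rfl
      have hSiT : S = insert v T := by
        ext x
        rw [hS, hT]
        simp only [Finset.mem_biUnion, Finset.mem_insert, Finset.mem_erase,
          Finset.mem_filter, id]
        constructor
        · rintro ⟨e, ⟨he, hve⟩, hxe⟩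
          by_cases hxv : x = v
          · exact Or.inl hxv
          · exact Or.inr ⟨e, ⟨he, hve⟩, hxv, hxe⟩
        · rintro (rfl | ⟨e, ⟨he, hve⟩, -, hxe⟩)
          · obtain ⟨e, he, hve⟩ := hcov x
            exact ⟨e, ⟨he, hve⟩, hve⟩
          · exact ⟨e, ⟨he, hve⟩, hxe⟩
      have hSuniv : S = Finset.univ := Finset.eq_univ_iff_forall.2 hallS
      have hcardS : n = 1 + (r + 1) * (r - 1) := by
        rw [← hn, ← Finset.card_univ, ← hSuniv, hSiT,
          Finset.card_insert_of_notMem hvT, hTcard]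
        omega
      obtain ⟨s, rfl⟩ : ∃ s, r = s + 3 := ⟨r - 3, by omega⟩
      have hrs : s + 3 - 1 = s + 2 := by omega
      rw [hrs] at hcardS
      rw [hcardS]; ring
    · intro w
      obtain ⟨e, he, hwe⟩ := Finset.mem_biUnion.1 (hallS w)
      rw [Finset.mem_filter] at he
      exact ⟨e, he.1, he.2, hwe⟩
  have hV : Nonempty V := by
    rw [← Fintype.card_pos_iff, hn]
    omega
  obtain ⟨v₀⟩ := hV
  refine ⟨(hkey v₀).1, ?_⟩
  intro u w hne
  obtain ⟨e, he, hue, hwe⟩ := (hkey u).2 w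
  refine ⟨e, ⟨he, hue, hwe⟩, ?_⟩
  rintro e' ⟨he', hue', hwe'⟩
  by_contra hne'
  have h1 : w ∈ e' ∩ e := Finset.mem_inter.2 ⟨hwe', hwe⟩
  rw [hpair he' he hne' hue' hue] at h1
  exact hne (Finset.mem_singleton.1 h1).symm
end

section
/- Let r ≥ 3 and let H be a linear r-uniform hypergraph. Suppose there is a hyperedge e of H containing three distinct vertices a, b, c with d(a) ≥ 2r, d(b) ≥ r+1, and d(c) ≥ 2. Then H contains a copy of the crown E_4^r with base e: there exist three pairwise disjoint hyperedges f_1, f_2, f_3, each distinct from e and each intersecting e. -/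
/-- Auxiliary counting lemma: in a linear hypergraph, the number of edges through a
vertex `x ∉ f` that intersect a fixed set `f` is at most `f.card`. -/
lemma stmt_14_aux {V : Type*} [DecidableEq V] (E : Finset (Finset V))
    (hlinear : ∀ e ∈ E, ∀ f ∈ E, e ≠ f → (e ∩ f).card ≤ 1)
    (x : V) (f : Finset V) (hx : x ∉ f) :
    (E.filter (fun g => x ∈ g ∧ (g ∩ f).Nonempty)).card ≤ f.card := by
  classical
  apply Finset.card_le_card_of_injOn (fun g => if h : (g ∩ f).Nonempty then h.choose else x)
  · intro g hg
    replace hg : g ∈ E ∧ x ∈ g ∧ (g ∩ f).Nonempty := by simpa using hg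
    show (if h : (g ∩ f).Nonempty then h.choose else x) ∈ f
    rw [dif_pos hg.2.2]
    exact (Finset.mem_inter.mp hg.2.2.choose_spec).2
  · intro g hg g' hg' heq
    simp only [Finset.coe_filter, Set.mem_setOf_eq] at hg hg'
    by_contra hne
    have hvg := hg.2.2.choose_spec
    have hvg' := hg'.2.2.choose_spec
    simp only [dif_pos hg.2.2, dif_pos hg'.2.2] at heq
    set v := hg.2.2.choose with hv
    have hvmem : v ∈ g ∩ g' := by
      rw [Finset.mem_inter]
      refine ⟨(Finset.mem_inter.mp hvg).1, ?_⟩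
      rw [heq]
      exact (Finset.mem_inter.mp hvg').1
    have hxmem : x ∈ g ∩ g' := Finset.mem_inter.mpr ⟨hg.2.1, hg'.2.1⟩
    have hxv : x ≠ v := fun h => hx (h ▸ (Finset.mem_inter.mp hvg).2)
    have h2 : 1 < (g ∩ g').card := Finset.one_lt_card.mpr ⟨x, hxmem, v, hvmem, hxv⟩
    have := hlinear g hg.1 g' hg'.1 hne
    omega

/-- In a linear r-uniform hypergraph, if some hyperedge e contains three
distinct vertices a, b, c with d(a) ≥ 2r, d(b) ≥ r+1 and d(c) ≥ 2, then H contains a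
crown E_4^r with base e. -/
theorem stmt_14 {V : Type*} [Fintype V] [DecidableEq V]
    (r : ℕ) (hr : 3 ≤ r)
    (E : Finset (Finset V))
    (huniform : ∀ e ∈ E, e.card = r)
    (hlinear : ∀ e ∈ E, ∀ f ∈ E, e ≠ f → (e ∩ f).card ≤ 1)
    (e : Finset V) (he : e ∈ E)
    (a b c : V) (ha : a ∈ e) (hb : b ∈ e) (hc : c ∈ e)
    (hab : a ≠ b) (hac : a ≠ c) (hbc : b ≠ c)
    (hda : 2 * r ≤ (E.filter (fun g => a ∈ g)).card)
    (hdb : r + 1 ≤ (E.filter (fun g => b ∈ g)).card)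
    (hdc : 2 ≤ (E.filter (fun g => c ∈ g)).card) :
    ∃ f₁ ∈ E, ∃ f₂ ∈ E, ∃ f₃ ∈ E,
      f₁ ≠ e ∧ f₂ ≠ e ∧ f₃ ≠ e ∧
      f₁ ∩ f₂ = ∅ ∧ f₁ ∩ f₃ = ∅ ∧ f₂ ∩ f₃ = ∅ ∧
      (f₁ ∩ e).Nonempty ∧ (f₂ ∩ e).Nonempty ∧ (f₃ ∩ e).Nonempty := by
  classical
  -- Step 1: find f₃ containing c, distinct from e
  obtain ⟨f₃, hf₃mem, hf₃ne⟩ :=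
    Finset.exists_mem_ne (lt_of_lt_of_le one_lt_two hdc) e
  rw [Finset.mem_filter] at hf₃mem
  obtain ⟨hf₃E, hcf₃⟩ := hf₃mem
  have hef₃card : (e ∩ f₃).card ≤ 1 := hlinear e he f₃ hf₃E (Ne.symm hf₃ne)
  have hcef₃ : c ∈ e ∩ f₃ := Finset.mem_inter.mpr ⟨hc, hcf₃⟩
  have hbf₃ : b ∉ f₃ := fun h =>
    hbc (Finset.card_le_one.mp hef₃card b (Finset.mem_inter.mpr ⟨hb, h⟩) c hcef₃)
  have haf₃ : a ∉ f₃ := fun h =>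
    hac (Finset.card_le_one.mp hef₃card a (Finset.mem_inter.mpr ⟨ha, h⟩) c hcef₃)
  have hf₃card : f₃.card = r := huniform f₃ hf₃E
  -- Step 2: find f₂ containing b, disjoint from f₃
  have hcount3 := stmt_14_aux E hlinear b f₃ hbf₃
  have hsplit := Finset.card_filter_add_card_filter_not
      (s := E.filter (fun g => b ∈ g)) (p := fun g => (g ∩ f₃).Nonempty)
  rw [Finset.filter_filter, Finset.filter_filter] at hsplit
  have hgood2 : (E.filter (fun g => b ∈ g ∧ ¬(g ∩ f₃).Nonempty)).Nonempty := by
    rw [← Finset.card_pos]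
    omega
  obtain ⟨f₂, hf₂⟩ := hgood2
  rw [Finset.mem_filter] at hf₂
  obtain ⟨hf₂E, hbf₂, hf₂f₃'⟩ := hf₂
  have hf₂f₃ : f₂ ∩ f₃ = ∅ := Finset.not_nonempty_iff_eq_empty.mp hf₂f₃'
  have hf₂ne : f₂ ≠ e := fun h => hf₂f₃' (h ▸ ⟨c, hcef₃⟩)
  have hef₂card : (e ∩ f₂).card ≤ 1 := hlinear e he f₂ hf₂E (Ne.symm hf₂ne)
  have hbef₂ : b ∈ e ∩ f₂ := Finset.mem_inter.mpr ⟨hb, hbf₂⟩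
  have haf₂ : a ∉ f₂ := fun h =>
    hab (Finset.card_le_one.mp hef₂card a (Finset.mem_inter.mpr ⟨ha, h⟩) b hbef₂)
  have hf₂card : f₂.card = r := huniform f₂ hf₂E
  -- Step 3: find f₁ containing a, disjoint from f₂ and f₃
  set A := E.filter (fun g => a ∈ g ∧ (g ∩ f₂).Nonempty) with hA
  set B := E.filter (fun g => a ∈ g ∧ (g ∩ f₃).Nonempty) with hB
  have hAcard : A.card ≤ r := hf₂card ▸ stmt_14_aux E hlinear a f₂ haf₂
  have hBcard : B.card ≤ r := hf₃card ▸ stmt_14_aux E hlinear a f₃ haf₃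
  have heAB : e ∈ A ∩ B := by
    rw [Finset.mem_inter, hA, hB, Finset.mem_filter, Finset.mem_filter]
    exact ⟨⟨he, ha, ⟨b, hbef₂⟩⟩, ⟨he, ha, ⟨c, hcef₃⟩⟩⟩
  have hinter : 1 ≤ (A ∩ B).card := Finset.card_pos.mpr ⟨e, heAB⟩
  have hunion := Finset.card_union_add_card_inter A B
  have hsplit2 := Finset.card_filter_add_card_filter_not
      (s := E.filter (fun g => a ∈ g))
      (p := fun g => (g ∩ f₂).Nonempty ∨ (g ∩ f₃).Nonempty)
  rw [Finset.filter_filter, Finset.filter_filter] at hsplit2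
  have hAB : E.filter (fun g => a ∈ g ∧ ((g ∩ f₂).Nonempty ∨ (g ∩ f₃).Nonempty)) = A ∪ B := by
    ext g
    simp only [hA, hB, Finset.mem_union, Finset.mem_filter]
    tauto
  rw [hAB] at hsplit2
  have hgood1 : (E.filter
      (fun g => a ∈ g ∧ ¬((g ∩ f₂).Nonempty ∨ (g ∩ f₃).Nonempty))).Nonempty := by
    rw [← Finset.card_pos]
    omega
  obtain ⟨f₁, hf₁⟩ := hgood1
  rw [Finset.mem_filter] at hf₁
  obtain ⟨hf₁E, haf₁, hf₁bad⟩ := hf₁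
  rw [not_or] at hf₁bad
  obtain ⟨hf₁f₂', hf₁f₃'⟩ := hf₁bad
  have hf₁ne : f₁ ≠ e := fun h => hf₁f₂' (h ▸ ⟨b, hbef₂⟩)
  refine ⟨f₁, hf₁E, f₂, hf₂E, f₃, hf₃E, hf₁ne, hf₂ne, hf₃ne,
    Finset.not_nonempty_iff_eq_empty.mp hf₁f₂',
    Finset.not_nonempty_iff_eq_empty.mp hf₁f₃', hf₂f₃,
    ⟨a, Finset.mem_inter.mpr ⟨haf₁, ha⟩⟩,
    ⟨b, Finset.mem_inter.mpr ⟨hbf₂, hb⟩⟩,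
    ⟨c, Finset.mem_inter.mpr ⟨hcf₃, hc⟩⟩⟩
end

section
/- Let r ≥ 3 and let H be a linear r-uniform hypergraph containing no copy of the crown E_4^r in which every vertex has degree at least 2. If v is a vertex with d(v) ≥ 4r−3 and e is a hyperedge containing v, then every vertex u ∈ e with u ≠ v satisfies d(u) ≤ r. -/
/-- Edges of a linear hypergraph through a fixed vertex `u` that meet a set `T`
not containing `u` are at most `|T|` many. -/
lemma star_card_le {V : Type*} [DecidableEq V] (E : Finset (Finset V))
    (hlinear : ∀ e ∈ E, ∀ f ∈ E, e ≠ f → (e ∩ f).card ≤ 1)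
    (u : V) (T : Finset V) (hu : u ∉ T) :
    (E.filter fun g => u ∈ g ∧ (g ∩ T).Nonempty).card ≤ T.card := by
  classical
  apply Finset.card_le_card_of_injOn
    (fun g => if h : (g ∩ T).Nonempty then h.choose else u)
  · intro g hg
    simp only [Finset.coe_filter, Set.mem_setOf_eq, Finset.mem_filter, Finset.mem_coe] at hg
    show (if h : (g ∩ T).Nonempty then h.choose else u) ∈ T
    rw [dif_pos hg.2.2]
    exact (Finset.mem_inter.1 hg.2.2.choose_spec).2
  · intro g hg g' hg' hgg'
    simp only [Finset.coe_filter, Set.mem_setOf_eq] at hg hg'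
    have hgg' : (if h : (g ∩ T).Nonempty then h.choose else u)
        = (if h : (g' ∩ T).Nonempty then h.choose else u) := hgg'
    rw [dif_pos hg.2.2, dif_pos hg'.2.2] at hgg'
    by_contra hne
    have h1 := Finset.mem_inter.1 hg.2.2.choose_spec
    have h2 := Finset.mem_inter.1 hg'.2.2.choose_spec
    set x := hg.2.2.choose
    have hxg' : x ∈ g' := by rw [hgg']; exact h2.1
    have hxu : x ≠ u := fun h => hu (h ▸ h1.2)
    have hsub : ({u, x} : Finset V) ⊆ g ∩ g' := by
      intro y hy
      rcases Finset.mem_insert.1 hy with rfl | hy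
      · exact Finset.mem_inter.2 ⟨hg.2.1, hg'.2.1⟩
      · rw [Finset.mem_singleton] at hy
        exact hy ▸ Finset.mem_inter.2 ⟨h1.1, hxg'⟩
    have := Finset.card_le_card hsub
    rw [Finset.card_pair (Ne.symm hxu)] at this
    exact absurd (hlinear g hg.1 g' hg'.1 hne) (by omega)

/-- In a linear r-uniform crown-free hypergraph with minimum degree ≥ 2,
if d(v) ≥ 4r−3 and v ∈ e ∈ E, then every other vertex u of e has d(u) ≤ r. -/
theorem stmt_15 {V : Type*} [Fintype V] [DecidableEq V]
    (r : ℕ) (hr : 3 ≤ r)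
    (E : Finset (Finset V))
    (huniform : ∀ e ∈ E, e.card = r)
    (hlinear : ∀ e ∈ E, ∀ f ∈ E, e ≠ f → (e ∩ f).card ≤ 1)
    (hcrownfree : ¬ ∃ f₁ ∈ E, ∃ f₂ ∈ E, ∃ f₃ ∈ E, ∃ e ∈ E,
      f₁ ≠ f₂ ∧ f₁ ≠ f₃ ∧ f₁ ≠ e ∧ f₂ ≠ f₃ ∧ f₂ ≠ e ∧ f₃ ≠ e ∧
      f₁ ∩ f₂ = ∅ ∧ f₁ ∩ f₃ = ∅ ∧ f₂ ∩ f₃ = ∅ ∧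
      (f₁ ∩ e).Nonempty ∧ (f₂ ∩ e).Nonempty ∧ (f₃ ∩ e).Nonempty)
    (hmindeg : ∀ w : V, 2 ≤ (E.filter (fun g => w ∈ g)).card)
    (v : V) (hdv : 4 * r - 3 ≤ (E.filter (fun g => v ∈ g)).card)
    (e : Finset V) (he : e ∈ E) (hve : v ∈ e) :
    ∀ u ∈ e, u ≠ v → (E.filter (fun g => u ∈ g)).card ≤ r := by
  classical
  intro u hue hune
  by_contra hcon
  push_neg at hcon
  -- a key fact: an edge containing two distinct vertices of e equals e
  have key : ∀ g ∈ E, ∀ a b : V, a ≠ b → a ∈ g → b ∈ g → a ∈ e → b ∈ e → g = e := by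
    intro g hg a b hab hag hbg hae hbe
    by_contra hne
    have hsub : ({a, b} : Finset V) ⊆ g ∩ e := by
      intro y hy
      rcases Finset.mem_insert.1 hy with rfl | hy
      · exact Finset.mem_inter.2 ⟨hag, hae⟩
      · rw [Finset.mem_singleton] at hy
        exact hy ▸ Finset.mem_inter.2 ⟨hbg, hbe⟩
    have := Finset.card_le_card hsub
    rw [Finset.card_pair hab] at this
    exact absurd (hlinear g hg e he hne) (by omega)
  -- choose w ∈ e, w ≠ u, w ≠ v
  have hwex : (e \ {u, v}).Nonempty := by
    rw [← Finset.card_pos]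
    have h1 := Finset.le_card_sdiff ({u, v} : Finset V) e
    have h2 : ({u, v} : Finset V).card ≤ 2 := Finset.card_insert_le _ _ |>.trans (by simp)
    have := huniform e he
    omega
  obtain ⟨w, hw⟩ := hwex
  rw [Finset.mem_sdiff] at hw
  obtain ⟨hwe, hwuv⟩ := hw
  have hwu : w ≠ u := fun h => hwuv (by simp [h])
  have hwv : w ≠ v := fun h => hwuv (by simp [h])
  -- f₃ : an edge through w other than e
  have hf3ex : ((E.filter (fun g => w ∈ g)).erase e).Nonempty := by
    rw [← Finset.card_pos, Finset.card_erase_of_mem (Finset.mem_filter.2 ⟨he, hwe⟩)]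
    have := hmindeg w; omega
  obtain ⟨f₃, hf₃⟩ := hf3ex
  have hf₃ne : f₃ ≠ e := Finset.ne_of_mem_erase hf₃
  have hf₃' := Finset.mem_filter.1 (Finset.mem_of_mem_erase hf₃)
  obtain ⟨hf₃E, hwf₃⟩ := hf₃'
  have huf₃ : u ∉ f₃ := fun h => hf₃ne (key f₃ hf₃E u w (Ne.symm hwu) h hwf₃ hue hwe)
  have hvf₃ : v ∉ f₃ := fun h => hf₃ne (key f₃ hf₃E v w (Ne.symm hwv) h hwf₃ hve hwe)
  -- f₂ : an edge through u other than e, disjoint from f₃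
  have hf2ex : ∃ f₂ ∈ (E.filter (fun g => u ∈ g)).erase e, f₂ ∩ f₃ = ∅ := by
    by_contra hno
    push_neg at hno
    have hsub : (E.filter (fun g => u ∈ g)).erase e ⊆
        E.filter fun g => u ∈ g ∧ (g ∩ (f₃.erase w)).Nonempty := by
      intro g hg
      have hgne : g ≠ e := Finset.ne_of_mem_erase hg
      have hg' := Finset.mem_filter.1 (Finset.mem_of_mem_erase hg)
      have hmeet := hno g hg
      obtain ⟨x, hx⟩ := hmeet
      rw [Finset.mem_inter] at hx
      have hxw : x ≠ w := fun h =>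
        hgne (key g hg'.1 u x (fun h' => huf₃ (h' ▸ hx.2)) hg'.2 hx.1 hue (h ▸ hwe))
      exact Finset.mem_filter.2 ⟨hg'.1, hg'.2, ⟨x, Finset.mem_inter.2
        ⟨hx.1, Finset.mem_erase.2 ⟨hxw, hx.2⟩⟩⟩⟩
    have h1 := Finset.card_le_card hsub
    have h2 := star_card_le E hlinear u (f₃.erase w)
      (fun h => huf₃ (Finset.mem_of_mem_erase h))
    have h3 : (f₃.erase w).card = r - 1 := by
      rw [Finset.card_erase_of_mem hwf₃, huniform f₃ hf₃E]
    have h4 : ((E.filter (fun g => u ∈ g)).erase e).card =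
        (E.filter (fun g => u ∈ g)).card - 1 :=
      Finset.card_erase_of_mem (Finset.mem_filter.2 ⟨he, hue⟩)
    omega
  obtain ⟨f₂, hf₂m, hf₂f₃⟩ := hf2ex
  have hf₂ne : f₂ ≠ e := Finset.ne_of_mem_erase hf₂m
  have hf₂' := Finset.mem_filter.1 (Finset.mem_of_mem_erase hf₂m)
  obtain ⟨hf₂E, huf₂⟩ := hf₂'
  have hvf₂ : v ∉ f₂ := fun h => hf₂ne (key f₂ hf₂E u v hune huf₂ h hue hve)
  -- f₁ : an edge through v other than e, disjoint from f₂ ∪ f₃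
  have hf1ex : ∃ f₁ ∈ (E.filter (fun g => v ∈ g)).erase e, f₁ ∩ (f₂ ∪ f₃) = ∅ := by
    by_contra hno
    push_neg at hno
    set T : Finset V := (f₂ ∪ f₃) \ {u, w} with hT
    have hvT : v ∉ T := by
      intro h
      rcases Finset.mem_union.1 (Finset.mem_sdiff.1 h).1 with h' | h'
      · exact hvf₂ h'
      · exact hvf₃ h'
    have hsub : (E.filter (fun g => v ∈ g)).erase e ⊆
        E.filter fun g => v ∈ g ∧ (g ∩ T).Nonempty := by
      intro g hg
      have hgne : g ≠ e := Finset.ne_of_mem_erase hg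
      have hg' := Finset.mem_filter.1 (Finset.mem_of_mem_erase hg)
      have hmeet := hno g hg
      obtain ⟨x, hx⟩ := hmeet
      rw [Finset.mem_inter] at hx
      have hxu : x ≠ u := fun h =>
        hgne (key g hg'.1 v x (fun h' => hune (h ▸ h'.symm)) hg'.2 hx.1 hve (h ▸ hue))
      have hxw : x ≠ w := fun h =>
        hgne (key g hg'.1 v x (fun h' => hwv (h ▸ h'.symm)) hg'.2 hx.1 hve (h ▸ hwe))
      exact Finset.mem_filter.2 ⟨hg'.1, hg'.2, ⟨x, Finset.mem_inter.2
        ⟨hx.1, Finset.mem_sdiff.2 ⟨hx.2, by simp [hxu, hxw]⟩⟩⟩⟩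
    have h1 := Finset.card_le_card hsub
    have h2 := star_card_le E hlinear v T hvT
    have h3 : T.card ≤ 2 * r - 2 := by
      have huT : ({u, w} : Finset V) ⊆ f₂ ∪ f₃ := by
        intro y hy
        rcases Finset.mem_insert.1 hy with rfl | hy
        · exact Finset.mem_union_left _ huf₂
        · rw [Finset.mem_singleton] at hy
          exact hy ▸ Finset.mem_union_right _ hwf₃
      have h5 : T.card = (f₂ ∪ f₃).card - 2 := by
        rw [hT, Finset.card_sdiff_of_subset huT, Finset.card_pair (Ne.symm hwu)]
      have h6 : (f₂ ∪ f₃).card ≤ 2 * r := by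
        have := Finset.card_union_le f₂ f₃
        rw [huniform f₂ hf₂E, huniform f₃ hf₃E] at this
        omega
      omega
    have h4 : ((E.filter (fun g => v ∈ g)).erase e).card =
        (E.filter (fun g => v ∈ g)).card - 1 :=
      Finset.card_erase_of_mem (Finset.mem_filter.2 ⟨he, hve⟩)
    omega
  obtain ⟨f₁, hf₁m, hf₁dis⟩ := hf1ex
  have hf₁ne : f₁ ≠ e := Finset.ne_of_mem_erase hf₁m
  have hf₁' := Finset.mem_filter.1 (Finset.mem_of_mem_erase hf₁m)
  obtain ⟨hf₁E, hvf₁⟩ := hf₁'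
  have hf₁f₂ : f₁ ∩ f₂ = ∅ := by
    rw [Finset.inter_union_distrib_left] at hf₁dis
    exact Finset.union_eq_empty.1 hf₁dis |>.1
  have hf₁f₃ : f₁ ∩ f₃ = ∅ := by
    rw [Finset.inter_union_distrib_left] at hf₁dis
    exact Finset.union_eq_empty.1 hf₁dis |>.2
  apply hcrownfree
  refine ⟨f₁, hf₁E, f₂, hf₂E, f₃, hf₃E, e, he, ?_, ?_, hf₁ne, ?_, hf₂ne, hf₃ne,
    hf₁f₂, hf₁f₃, hf₂f₃, ⟨v, Finset.mem_inter.2 ⟨hvf₁, hve⟩⟩,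
    ⟨u, Finset.mem_inter.2 ⟨huf₂, hue⟩⟩, ⟨w, Finset.mem_inter.2 ⟨hwf₃, hwe⟩⟩⟩
  · intro h; rw [h, Finset.inter_self] at hf₁f₂
    exact absurd hf₁f₂ (Finset.nonempty_iff_ne_empty.1 ⟨u, huf₂⟩)
  · intro h; rw [h, Finset.inter_self] at hf₁f₃
    exact absurd hf₁f₃ (Finset.nonempty_iff_ne_empty.1 ⟨w, hwf₃⟩)
  · intro h; rw [h, Finset.inter_self] at hf₂f₃
    exact absurd hf₂f₃ (Finset.nonempty_iff_ne_empty.1 ⟨w, hwf₃⟩)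
end

section
/- Let r ≥ 2 and let C be a Steiner system S(2,r,r²), i.e., an r-uniform hypergraph on a vertex set of size r² in which every pair of distinct vertices is contained in exactly one hyperedge. Then C contains no copy of P_4^r: there do not exist four distinct hyperedges e_1, e_2, e_3, e_4 of C with e_1 ∩ e_2 ≠ ∅, e_2 ∩ e_3 ≠ ∅, e_3 ∩ e_4 ≠ ∅, e_1 ∩ e_3 = ∅, e_1 ∩ e_4 = ∅, and e_2 ∩ e_4 = ∅. -/
/-!
Pick `p ∈ e₃ ∩ e₄`; then `p ∉ e₁`. Counting the points other than `p` shows that exactly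
`r + 1` blocks pass through `p`, and the `r` points of `e₁` lie on `r` distinct blocks through
`p`, so at most one block through `p` misses `e₁` (Playfair's axiom for the affine plane).
But `e₃` and `e₄` both miss `e₁`.
-/

section

open Finset

variable {V : Type*}

def IsLinearSpace (E : Finset (Finset V)) : Prop :=
  ∀ u v : V, u ≠ v → ∃! e, e ∈ E ∧ u ∈ e ∧ v ∈ e

theorem IsLinearSpace.eq_of_mem_of_mem {E : Finset (Finset V)} (hE : IsLinearSpace E) {u v : V}
    {e e' : Finset V} (huv : u ≠ v) (he : e ∈ E) (hue : u ∈ e) (hve : v ∈ e) (he' : e' ∈ E)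
    (hue' : u ∈ e') (hve' : v ∈ e') : e = e' :=
  (hE u v huv).unique ⟨he, hue, hve⟩ ⟨he', hue', hve'⟩

variable [DecidableEq V]

def pencil (E : Finset (Finset V)) (p : V) : Finset (Finset V) :=
  E.filter (p ∈ ·)

@[simp]
theorem mem_pencil {E : Finset (Finset V)} {p : V} {e : Finset V} :
    e ∈ pencil E p ↔ e ∈ E ∧ p ∈ e :=
  mem_filter

namespace IsLinearSpace

variable {E : Finset (Finset V)} {r : ℕ}

theorem card_inter_le_one (hE : IsLinearSpace E) {e e' : Finset V} (he : e ∈ E) (he' : e' ∈ E)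
    (hne : e ≠ e') : #(e ∩ e') ≤ 1 := by
  refine card_le_one.2 fun u hu v hv => ?_
  by_contra huv
  rw [mem_inter] at hu hv
  exact hne (hE.eq_of_mem_of_mem huv he hu.1 hv.1 he' hu.2 hv.2)

theorem card_pencil_mul [Fintype V] (hE : IsLinearSpace E) (huniform : ∀ e ∈ E, #e = r) (p : V) :
    #(pencil E p) * (r - 1) = Fintype.card V - 1 := by
  have hcover : (pencil E p).biUnion (·.erase p) = univ.erase p := by
    ext v
    simp only [mem_biUnion, mem_pencil, mem_erase, mem_univ, and_true]
    refine ⟨fun ⟨_, _, hv, _⟩ => hv, fun hv => ?_⟩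
    obtain ⟨e, ⟨he, hpe, hve⟩, -⟩ := hE p v (Ne.symm hv)
    exact ⟨e, ⟨he, hpe⟩, hv, hve⟩
  have hdisj : (pencil E p : Set (Finset V)).PairwiseDisjoint (·.erase p) := by
    intro e he e' he' hne
    refine disjoint_left.2 fun v hv hv' => ?_
    rw [mem_coe, mem_pencil] at he he'
    rw [mem_erase] at hv hv'
    exact hne (hE.eq_of_mem_of_mem hv.1.symm he.1 he.2 hv.2 he'.1 he'.2 hv'.2)
  rw [← card_univ, ← card_erase_of_mem (mem_univ p), ← hcover, card_biUnion hdisj,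
    sum_congr rfl fun e he => ?_, sum_const, smul_eq_mul]
  rw [mem_pencil] at he
  rw [card_erase_of_mem he.2, huniform e he.1]

theorem card_pencil_of_card_eq_sq [Fintype V] (hE : IsLinearSpace E) (huniform : ∀ e ∈ E, #e = r)
    (hr : 2 ≤ r) (hcard : Fintype.card V = r ^ 2) (p : V) : #(pencil E p) = r + 1 := by
  have h := hE.card_pencil_mul huniform p
  rw [hcard, show r ^ 2 - 1 = (r + 1) * (r - 1) by simpa using Nat.sq_sub_sq r 1] at h
  exact Nat.eq_of_mul_eq_mul_right (by omega) h

theorem card_le_card_filter_pencil (hE : IsLinearSpace E) {e : Finset V} {p : V} (he : e ∈ E)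
    (hp : p ∉ e) : #e ≤ #((pencil E p).filter (¬Disjoint · e)) := by
  have hcover : e ⊆ ((pencil E p).filter (¬Disjoint · e)).biUnion (· ∩ e) := by
    intro q hq
    obtain ⟨f, ⟨hf, hpf, hqf⟩, -⟩ := hE p q (ne_of_mem_of_not_mem hq hp).symm
    exact mem_biUnion.2 ⟨f, mem_filter.2 ⟨mem_pencil.2 ⟨hf, hpf⟩,
      not_disjoint_iff.2 ⟨q, hqf, hq⟩⟩, mem_inter.2 ⟨hqf, hq⟩⟩
  calc #e ≤ ∑ f ∈ (pencil E p).filter (¬Disjoint · e), #(f ∩ e) :=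
        (card_le_card hcover).trans card_biUnion_le
    _ ≤ ∑ _ ∈ (pencil E p).filter (¬Disjoint · e), 1 := by
        refine sum_le_sum fun f hf => ?_
        obtain ⟨hf, hpf⟩ := mem_pencil.1 (mem_filter.1 hf).1
        exact hE.card_inter_le_one hf he (ne_of_mem_of_not_mem' hpf hp)
    _ = _ := by rw [card_eq_sum_ones]

theorem eq_of_disjoint_of_disjoint [Fintype V] (hE : IsLinearSpace E)
    (huniform : ∀ e ∈ E, #e = r) (hr : 2 ≤ r) (hcard : Fintype.card V = r ^ 2)
    {e f g : Finset V} {p : V} (he : e ∈ E) (hp : p ∉ e) (hf : f ∈ pencil E p)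
    (hg : g ∈ pencil E p) (hfe : Disjoint f e) (hge : Disjoint g e) : f = g := by
  have hmeet := hE.card_le_card_filter_pencil he hp
  have hsplit := card_filter_add_card_filter_not (s := pencil E p) (Disjoint · e)
  rw [hE.card_pencil_of_card_eq_sq huniform hr hcard] at hsplit
  rw [huniform e he] at hmeet
  have hmiss : #((pencil E p).filter (Disjoint · e)) ≤ 1 := by omega
  exact card_le_one.1 hmiss f (mem_filter.2 ⟨hf, hfe⟩) g (mem_filter.2 ⟨hg, hge⟩)

end IsLinearSpace

end

/-- A Steiner system S(2,r,r²) contains no copy of the linear path P_4^r. -/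
theorem stmt_16 {V : Type*} [Fintype V] [DecidableEq V]
    (r : ℕ) (hr : 2 ≤ r)
    (hcard : Fintype.card V = r ^ 2)
    (E : Finset (Finset V))
    (huniform : ∀ e ∈ E, e.card = r)
    (hsteiner : ∀ u v : V, u ≠ v → ∃! e, e ∈ E ∧ u ∈ e ∧ v ∈ e) :
    ¬ ∃ e₁ ∈ E, ∃ e₂ ∈ E, ∃ e₃ ∈ E, ∃ e₄ ∈ E,
      e₁ ≠ e₂ ∧ e₁ ≠ e₃ ∧ e₁ ≠ e₄ ∧ e₂ ≠ e₃ ∧ e₂ ≠ e₄ ∧ e₃ ≠ e₄ ∧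
      (e₁ ∩ e₂).Nonempty ∧ (e₂ ∩ e₃).Nonempty ∧ (e₃ ∩ e₄).Nonempty ∧
      e₁ ∩ e₃ = ∅ ∧ e₁ ∩ e₄ = ∅ ∧ e₂ ∩ e₄ = ∅ := by
  rintro ⟨e₁, he₁, -, -, e₃, he₃, e₄, he₄, -, -, -, -, -, h34, -, -, ⟨p, hp⟩, d13, d14, -⟩
  rw [Finset.mem_inter] at hp
  have hd3 : Disjoint e₃ e₁ := (Finset.disjoint_iff_inter_eq_empty.2 d13).symm
  have hd4 : Disjoint e₄ e₁ := (Finset.disjoint_iff_inter_eq_empty.2 d14).symm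
  have hp1 : p ∉ e₁ := Finset.disjoint_left.1 hd3 hp.1
  exact h34 (IsLinearSpace.eq_of_disjoint_of_disjoint hsteiner huniform hr hcard he₁ hp1
    (mem_pencil.2 ⟨he₃, hp.1⟩) (mem_pencil.2 ⟨he₄, hp.2⟩) hd3 hd4)
end
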